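/- arXiv:1712.03317 — 4 statements merged into one kernel-verified Lean document; each statement's English description precedes it below -/
import Mathlib

section
/- Consider the triangular array of independent binomial observations under the null hypothesis H₀: π₁ = ⋯ = π_k = π with π ≤ δ for a fixed δ < 1 and n_i ≥ 2, and write θ̃ = π̄(1−π̄) (= π(1−π) under H₀). If (θ̃³ Σ_{i=1}^k 1/n_i + θ̃ Σ_{i=1}^k 1/n_i³) / (k θ̃² + (θ̃/N²) Σ_{i=1}^k 1/n_i)² → 0 as k → ∞, then 𝒱̂_{1*} / 𝒱_{1*} → 1 in probability as k → ∞. -/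
noncomputable section

/-- `X` has the `Binomial(n, p)` distribution under the measure `μ`. -/
def IsBinomial {Ω : Type*} [MeasurableSpace Ω] (μ : MeasureTheory.Measure Ω) (X : Ω → ℕ)
    (n : ℕ) (p : ℝ) : Prop :=
  ∀ m : ℕ, (μ {ω | X ω = m}).toReal = (n.choose m : ℝ) * p ^ m * (1 - p) ^ (n - m)

/-- A collection of `k` independent binomial observations `Xᵢ ~ Binomial(nᵢ, πᵢ)`,
indexed by `i ∈ Finset.range k`, with `nᵢ ≥ 2` and `πᵢ ∈ (0,1)`. -/
structure BinSetup where
  Ω : Type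
  [inst : MeasurableSpace Ω]
  μ : MeasureTheory.Measure Ω
  prob : MeasureTheory.IsProbabilityMeasure μ
  k : ℕ
  n : ℕ → ℕ
  pi : ℕ → ℝ
  X : ℕ → Ω → ℕ
  hn : ∀ i ∈ Finset.range k, 2 ≤ n i
  hpi : ∀ i ∈ Finset.range k, pi i ∈ Set.Ioo (0 : ℝ) 1
  hmeas : ∀ i, Measurable (X i)
  hindep : ProbabilityTheory.iIndepFun X μ
  hbin : ∀ i ∈ Finset.range k, IsBinomial μ (X i) (n i) (pi i)

attribute [instance] BinSetup.inst

open MeasureTheory ProbabilityTheory Filter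

/-- Standard normal cumulative distribution function. -/
def stdNormalCDF (z : ℝ) : ℝ :=
  ∫ x in Set.Iic z, Real.exp (-x ^ 2 / 2) / Real.sqrt (2 * Real.pi)

namespace BinSetup

variable (S : BinSetup)

/-- `N = Σ nᵢ` (as a real number). -/
def Nreal : ℝ := ∑ i ∈ Finset.range S.k, (S.n i : ℝ)

/-- `π̄ = (1/N) Σ nᵢ πᵢ`. -/
def pbar : ℝ := (∑ i ∈ Finset.range S.k, (S.n i : ℝ) * S.pi i) / S.Nreal

/-- `θᵢ = πᵢ(1 − πᵢ)`. -/
def theta (i : ℕ) : ℝ := S.pi i * (1 - S.pi i)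

/-- `π̂ᵢ = Xᵢ/nᵢ`. -/
def piHat (i : ℕ) (ω : S.Ω) : ℝ := (S.X i ω : ℝ) / (S.n i : ℝ)

/-- `π̂̄ = (1/N) Σ nᵢ π̂ᵢ` (the pooled estimator). -/
def pbarHat (ω : S.Ω) : ℝ :=
  (∑ i ∈ Finset.range S.k, (S.n i : ℝ) * S.piHat i ω) / S.Nreal

/-- `dᵢ = (nᵢ/(nᵢ−1))(1 − nᵢ/N)`. -/
def d (i : ℕ) : ℝ := ((S.n i : ℝ) / ((S.n i : ℝ) - 1)) * (1 - (S.n i : ℝ) / S.Nreal)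

/-- `𝒜_{1i}`. -/
def A1 (i : ℕ) : ℝ :=
  2 - 6 / (S.n i : ℝ) - S.d i ^ 2 / (S.n i : ℝ) + 8 * S.d i ^ 2 / (S.n i : ℝ) ^ 2
    - 6 * S.d i ^ 2 / (S.n i : ℝ) ^ 3 + 12 * S.d i * ((S.n i : ℝ) - 1) / (S.n i : ℝ) ^ 2

/-- `𝒜_{2i} = nᵢ/N²`. -/
def A2 (i : ℕ) : ℝ := (S.n i : ℝ) / S.Nreal ^ 2

/-- Coefficients `a_{li}`, `l = 1,2,3,4`. -/
def a (l i : ℕ) : ℝ :=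
  if l = 1 then S.A2 i
  else if l = 2 then S.A1 i - S.A2 i
  else if l = 3 then -2 * S.A1 i
  else S.A1 i

/-- The bias-corrected statistic `T = Σ nᵢ(π̂ᵢ − π̂̄)² − Σ dᵢ π̂ᵢ(1−π̂ᵢ)`. -/
def T (ω : S.Ω) : ℝ :=
  ∑ i ∈ Finset.range S.k, (S.n i : ℝ) * (S.piHat i ω - S.pbarHat ω) ^ 2
    - ∑ i ∈ Finset.range S.k, S.d i * S.piHat i ω * (1 - S.piHat i ω)

/-- `T₁ = Σ [nᵢ(π̂ᵢ−πᵢ)² − dᵢπ̂ᵢ(1−π̂ᵢ) + 2nᵢ(π̂ᵢ−πᵢ)(πᵢ−π̄) + nᵢ(πᵢ−π̄)²]`. -/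
def T1 (ω : S.Ω) : ℝ :=
  ∑ i ∈ Finset.range S.k,
    ((S.n i : ℝ) * (S.piHat i ω - S.pi i) ^ 2 - S.d i * S.piHat i ω * (1 - S.piHat i ω)
      + 2 * (S.n i : ℝ) * (S.piHat i ω - S.pi i) * (S.pi i - S.pbar)
      + (S.n i : ℝ) * (S.pi i - S.pbar) ^ 2)

/-- `𝒱₁ = Σ (𝒜_{1i}θᵢ² + 𝒜_{2i}θᵢ)`. -/
def V1 : ℝ := ∑ i ∈ Finset.range S.k, (S.A1 i * S.theta i ^ 2 + S.A2 i * S.theta i)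

/-- `𝒱_{1*} = (π̄(1−π̄))² Σ 𝒜_{1i} + π̄(1−π̄) Σ 𝒜_{2i}`. -/
def V1star : ℝ :=
  (S.pbar * (1 - S.pbar)) ^ 2 * ∑ i ∈ Finset.range S.k, S.A1 i
    + S.pbar * (1 - S.pbar) * ∑ i ∈ Finset.range S.k, S.A2 i

/-- `η̂_{li}`, the unbiased estimator of `πᵢ^l`. -/
def etaHat (l i : ℕ) (ω : S.Ω) : ℝ :=
  ((S.n i : ℝ) ^ l / ∏ j ∈ Finset.range l, ((S.n i : ℝ) - (j : ℝ))) *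
    ∏ j ∈ Finset.range l, (S.piHat i ω - (j : ℝ) / (S.n i : ℝ))

/-- `η̂_l`, the pooled unbiased estimator of `π^l` under `H₀`. -/
def etaHatPooled (l : ℕ) (ω : S.Ω) : ℝ :=
  (S.Nreal ^ l / ∏ j ∈ Finset.range l, (S.Nreal - (j : ℝ))) *
    ∏ j ∈ Finset.range l, (S.pbarHat ω - (j : ℝ) / S.Nreal)

/-- `𝒱̂₁ = Σᵢ Σ_{l=1}^4 a_{li} η̂_{li}`. -/
def V1hat (ω : S.Ω) : ℝ :=
  ∑ i ∈ Finset.range S.k, ∑ l ∈ Finset.Icc 1 4, S.a l i * S.etaHat l i ω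

/-- `𝒱̂_{1*} = Σᵢ Σ_{l=1}^4 a_{li} η̂_l`. -/
def V1starHat (ω : S.Ω) : ℝ :=
  ∑ i ∈ Finset.range S.k, ∑ l ∈ Finset.Icc 1 4, S.a l i * S.etaHatPooled l ω

/-- `‖π − π̄‖²_{nθ} = Σ nᵢ(πᵢ−π̄)²θᵢ`. -/
def normSqNTheta : ℝ :=
  ∑ i ∈ Finset.range S.k, (S.n i : ℝ) * (S.pi i - S.pbar) ^ 2 * S.theta i

/-- The formula for the variance of `T₁`:
`Var(T₁) = 𝒱₁ + 4Σ nᵢ(πᵢ−π̄)²θᵢ + (4/N)Σ nᵢ(πᵢ−π̄)(1−2πᵢ)θᵢ`. -/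
def varT1 : ℝ :=
  S.V1 + 4 * ∑ i ∈ Finset.range S.k, (S.n i : ℝ) * (S.pi i - S.pbar) ^ 2 * S.theta i
    + (4 / S.Nreal) * ∑ i ∈ Finset.range S.k,
        (S.n i : ℝ) * (S.pi i - S.pbar) * (1 - 2 * S.pi i) * S.theta i

/-- The oracle Cochran statistic `𝒯_S = Σ (Xᵢ − nᵢπ̄)²/(nᵢπ̄(1−π̄))`. -/
def TS (ω : S.Ω) : ℝ :=
  ∑ i ∈ Finset.range S.k,
    ((S.X i ω : ℝ) - (S.n i : ℝ) * S.pbar) ^ 2 / ((S.n i : ℝ) * S.pbar * (1 - S.pbar))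

/-- `E[𝒯_S]`. -/
def ETS : ℝ := ∫ ω, S.TS ω ∂S.μ

/-- `𝓑_k = Var(𝒯_S)`. -/
def Bk : ℝ := variance S.TS S.μ

/-- `𝓑_{0k} = Σ (2 − 6/nᵢ + 1/(nᵢπ̄(1−π̄)))`. -/
def B0k : ℝ :=
  ∑ i ∈ Finset.range S.k, (2 - 6 / (S.n i : ℝ) + 1 / ((S.n i : ℝ) * S.pbar * (1 - S.pbar)))

/-- `T₀ = (𝒯_S − k)/√𝓑_{0k}`. -/
def T0 (ω : S.Ω) : ℝ := (S.TS ω - (S.k : ℝ)) / Real.sqrt S.B0k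

/-- `μ_k = (E[𝒯_S] − k)/√𝓑_k`. -/
def muk : ℝ := (S.ETS - (S.k : ℝ)) / Real.sqrt S.Bk

/-- `σ_k = √(𝓑_k/𝓑_{0k})`. -/
def sigmak : ℝ := Real.sqrt (S.Bk / S.B0k)

/-- The data-driven Cochran statistic `T_S = Σ (Xᵢ − nᵢπ̂̄)²/(nᵢπ̂̄(1−π̂̄))`. -/
def TShat (ω : S.Ω) : ℝ :=
  ∑ i ∈ Finset.range S.k,
    ((S.X i ω : ℝ) - (S.n i : ℝ) * S.pbarHat ω) ^ 2
      / ((S.n i : ℝ) * S.pbarHat ω * (1 - S.pbarHat ω))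

/-- `𝓑̂_{0k} = Σ (2 − 6/nᵢ + 1/(nᵢπ̂̄(1−π̂̄)))`. -/
def B0khat (ω : S.Ω) : ℝ :=
  ∑ i ∈ Finset.range S.k,
    (2 - 6 / (S.n i : ℝ) + 1 / ((S.n i : ℝ) * S.pbarHat ω * (1 - S.pbarHat ω)))

/-- `T_χ = (T_S − k)/√𝓑̂_{0k}`. -/
def Tchi (ω : S.Ω) : ℝ := (S.TShat ω - (S.k : ℝ)) / Real.sqrt (S.B0khat ω)

end BinSetup


/-!
Under `H₀` every `η̂_l` is a polynomial in the pooled proportion `π̂̄`, and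
`𝒱̂_{1*} − 𝒱_{1*} = N⁻¹ L + (Σᵢ 𝒜_{1i}) Q`, where `L` and `Q` are the errors of the unbiased
plug-ins `N/(N−1) · π̂̄(1−π̂̄)` of `θ̃` and `N³/((N−1)(N−2)(N−3)) · π̂̄(π̂̄−1/N)(1−π̂̄)(1−π̂̄−1/N)`
of `θ̃²`. Once `|π̂̄ − π| ≤ cθ̃` and `1/N ≤ cθ̃`, these errors are at most `4cθ̃` and `15cθ̃²`;
as `Σᵢ 𝒜_{1i} ≥ 0`, this gives `|𝒱̂_{1*}/𝒱_{1*} − 1| ≤ 19c`. Chebyshev bounds the probability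
of `|π̂̄ − π| > cθ̃` by `1/(c²Nθ̃)`, and by Cauchy–Schwarz the ratio in the hypothesis is at least
`1/(2Nθ̃)`, so `Nθ̃ → ∞`.
-/

open Finset

section Binomial

open Polynomial

lemma bernsteinPolynomial_eval (n ν : ℕ) (p : ℝ) :
    (bernsteinPolynomial ℝ n ν).eval p = n.choose ν * p ^ ν * (1 - p) ^ (n - ν) := by
  simp [bernsteinPolynomial]

namespace IsBinomial

variable {Ω : Type*} [MeasurableSpace Ω] {μ : Measure Ω} {X : Ω → ℕ} {n : ℕ} {p : ℝ}

lemma measure_eq_zero_of_lt [IsFiniteMeasure μ] (hb : IsBinomial μ X n p) {m : ℕ}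
    (hm : n < m) : μ {ω | X ω = m} = 0 := by
  have := hb m
  rw [Nat.choose_eq_zero_of_lt hm, Nat.cast_zero, zero_mul, zero_mul,
    ENNReal.toReal_eq_zero_iff] at this
  exact this.resolve_right (measure_ne_top μ _)

lemma ae_le [IsFiniteMeasure μ] (hb : IsBinomial μ X n p) : ∀ᵐ ω ∂μ, X ω ≤ n := by
  have hnull : μ (⋃ m ∈ {m | n < m}, {ω | X ω = m}) = 0 :=
    (measure_biUnion_null_iff (Set.to_countable _)).2 fun m hm => hb.measure_eq_zero_of_lt hm
  refine measure_mono_null (fun ω hω => ?_) hnull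
  exact Set.mem_biUnion (x := X ω) (not_le.1 (show ¬X ω ≤ n from hω)) rfl

lemma integral_comp [IsFiniteMeasure μ] (hX : Measurable X) (hb : IsBinomial μ X n p)
    (g : ℕ → ℝ) :
    ∫ ω, g (X ω) ∂μ = ∑ m ∈ range (n + 1), g m * (bernsteinPolynomial ℝ n m).eval p := by
  have hmeas (m : ℕ) : MeasurableSet {ω | X ω = m} := hX (measurableSet_singleton m)
  calc ∫ ω, g (X ω) ∂μ
      = ∫ ω, ∑ m ∈ range (n + 1), {ω' | X ω' = m}.indicator (fun _ => g m) ω ∂μ := by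
        refine integral_congr_ae ?_
        filter_upwards [hb.ae_le] with ω hω
        simp [Set.indicator_apply, hω]
    _ = ∑ m ∈ range (n + 1), g m * (bernsteinPolynomial ℝ n m).eval p := by
        rw [integral_finsetSum _ fun m _ => (integrable_const (g m)).indicator (hmeas m)]
        refine sum_congr rfl fun m _ => ?_
        rw [integral_indicator_const _ (hmeas m), measureReal_def, hb m,
          bernsteinPolynomial_eval, smul_eq_mul, mul_comm]

variable [IsProbabilityMeasure μ]

lemma memLp (hX : Measurable X) (hb : IsBinomial μ X n p) (q : ENNReal) :
    MemLp (fun ω => (X ω : ℝ)) q μ := by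
  refine MemLp.of_bound (by fun_prop) (n : ℝ) ?_
  filter_upwards [hb.ae_le] with ω hω
  simpa using hω

lemma integral_eq (hX : Measurable X) (hb : IsBinomial μ X n p) :
    ∫ ω, (X ω : ℝ) ∂μ = n * p := by
  have h := congrArg (eval p) (bernsteinPolynomial.sum_smul (R := ℝ) n)
  simp only [nsmul_eq_mul, eval_finsetSum, eval_mul, eval_natCast, eval_X] at h
  rw [hb.integral_comp hX (fun m => (m : ℝ)), h]

lemma variance_eq (hX : Measurable X) (hb : IsBinomial μ X n p) :
    variance (fun ω => (X ω : ℝ)) μ = n * (p * (1 - p)) := by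
  have h := congrArg (eval p) (bernsteinPolynomial.variance (R := ℝ) n)
  simp only [eval_finsetSum, eval_mul, eval_pow, eval_sub, eval_X, nsmul_eq_mul, eval_natCast,
    eval_one] at h
  rw [variance_eq_integral (by fun_prop), hb.integral_eq hX,
    hb.integral_comp hX (fun m => ((m : ℝ) - n * p) ^ 2), ← mul_assoc, ← h]
  exact sum_congr rfl fun m _ => by ring

end IsBinomial

end Binomial

lemma abs_mul_one_sub_sub_mul_one_sub_le {x y t : ℝ} (hxy : |x - y| ≤ t)
    (ht : t ≤ y * (1 - y)) : |x * (1 - x) - y * (1 - y)| ≤ t := by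
  obtain ⟨h1, h2⟩ := abs_le.1 hxy
  have hy : 0 ≤ y * (1 - y) := ((abs_nonneg _).trans hxy).trans ht
  have hy0 : 0 ≤ y := by nlinarith
  have hy1 : y ≤ 1 := by nlinarith
  have hxy1 : |1 - x - y| ≤ 1 :=
    abs_le.2 ⟨by nlinarith [mul_nonneg (sub_nonneg.2 hy1) (by linarith : (0 : ℝ) ≤ 2 - y)],
      by nlinarith⟩
  rw [show x * (1 - x) - y * (1 - y) = (x - y) * (1 - x - y) by ring, abs_mul]
  simpa using mul_le_mul hxy hxy1 (abs_nonneg _) (by linarith)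

lemma one_div_le_two_mul_condition_ratio {ι : Type*} {s : Finset ι} (hs : s.Nonempty)
    {x : ι → ℝ} (hx : ∀ i ∈ s, 1 ≤ x i) {θ : ℝ} (hθ : 0 < θ) :
    1 / ((∑ i ∈ s, x i) * θ)
      ≤ 2 * ((θ ^ 3 * ∑ i ∈ s, 1 / x i + θ * ∑ i ∈ s, 1 / x i ^ 3)
        / (#s * θ ^ 2 + θ / (∑ i ∈ s, x i) ^ 2 * ∑ i ∈ s, 1 / x i) ^ 2) := by
  -- `(A + B)² ≤ 2A² + 2B²`; Cauchy–Schwarz `#s² ≤ N · Σ 1/xᵢ` handles `A²`, and `B²` is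
  -- handled by `Σ 1/xᵢ ≤ N` and `Σ 1/xᵢ³ ≥ 1/N³`.
  set N := ∑ i ∈ s, x i
  set S1 := ∑ i ∈ s, 1 / x i
  set S3 := ∑ i ∈ s, 1 / x i ^ 3
  have hx0 : ∀ i ∈ s, 0 < x i := fun i hi => one_pos.trans_le (hx i hi)
  obtain ⟨j, hj⟩ := hs
  have hxN : x j ≤ N := single_le_sum (fun i hi => (hx0 i hi).le) hj
  have hN : 0 < N := (hx0 j hj).trans_le hxN
  have hk : (0 : ℝ) < #s := by exact_mod_cast card_pos.2 ⟨j, hj⟩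
  have hkN : (#s : ℝ) ≤ N := by
    calc (#s : ℝ) = ∑ _i ∈ s, (1 : ℝ) := by simp
      _ ≤ N := sum_le_sum hx
  have hS1k : S1 ≤ #s := by
    calc S1 ≤ ∑ _i ∈ s, (1 : ℝ) :=
          sum_le_sum fun i hi => (div_le_one (hx0 i hi)).2 (hx i hi)
      _ = #s := by simp
  have hS1 : 0 ≤ S1 := sum_nonneg fun i hi => (one_div_pos.2 (hx0 i hi)).le
  have hS3 : 1 / N ^ 3 ≤ S3 :=
    (one_div_le_one_div_of_le (pow_pos (hx0 j hj) 3) (pow_le_pow_left₀ (hx0 j hj).le hxN 3)).trans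
      (single_le_sum (f := fun i => 1 / x i ^ 3) (fun i hi => by have := hx0 i hi; positivity) hj)
  have hCS : (#s : ℝ) ^ 2 ≤ N * S1 := by
    have h := sum_sq_le_sum_mul_sum_of_sq_le_mul s (r := fun _ => (1 : ℝ))
      (fun i hi => (hx0 i hi).le) (fun i hi => (one_div_pos.2 (hx0 i hi)).le)
      (fun i hi => by rw [mul_one_div_cancel (hx0 i hi).ne', one_pow])
    rwa [sum_const, nsmul_one] at h
  set A := (#s : ℝ) * θ ^ 2
  set B := θ / N ^ 2 * S1
  have hB : B ≤ θ / N := by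
    calc B ≤ θ / N ^ 2 * N := mul_le_mul_of_nonneg_left (hS1k.trans hkN) (by positivity)
      _ = θ / N := by field_simp
  have hA2 : A ^ 2 ≤ N * θ * (θ ^ 3 * S1) := by
    nlinarith [mul_le_mul_of_nonneg_left hCS (pow_nonneg hθ.le 4)]
  have hB2 : B ^ 2 ≤ N * θ * (θ * S3) := by
    have h : N * θ * (θ * (1 / N ^ 3)) = (θ / N) ^ 2 := by field_simp
    nlinarith [mul_le_mul_of_nonneg_left hS3 (by positivity : 0 ≤ N * θ * θ),
      pow_le_pow_left₀ (by positivity : 0 ≤ B) hB 2]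
  rw [mul_div_assoc', div_le_div_iff₀ (by positivity) (by positivity)]
  nlinarith [sq_nonneg (A - B)]

section Perturbation

variable {N θ c u : ℝ}

lemma one_le_div_sub_one_and_sub_one_le (hN : 12 ≤ N) :
    1 ≤ N / (N - 1) ∧ N / (N - 1) - 1 ≤ 2 * (1 / N) := by
  have h1 : 0 < N - 1 := by linarith
  refine ⟨by rw [le_div_iff₀ h1]; linarith, ?_⟩
  rw [div_sub_one h1.ne', ← mul_div_assoc, mul_one, div_le_div_iff₀ h1 (by linarith)]
  linarith

lemma one_le_cube_div_and_sub_one_le (hN : 12 ≤ N) :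
    1 ≤ N ^ 3 / ((N - 1) * (N - 2) * (N - 3))
      ∧ N ^ 3 / ((N - 1) * (N - 2) * (N - 3)) - 1 ≤ 15 * (1 / N) := by
  have hden : 0 < (N - 1) * (N - 2) * (N - 3) :=
    mul_pos (mul_pos (by linarith) (by linarith)) (by linarith)
  refine ⟨by rw [le_div_iff₀ hden]; nlinarith, ?_⟩
  rw [div_sub_one hden.ne', ← mul_div_assoc, mul_one, div_le_div_iff₀ hden (by linarith)]
  nlinarith [sq_nonneg (N - 12), mul_nonneg (sq_nonneg (N - 12)) (by linarith : (0:ℝ) ≤ N)]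

variable (hN : 12 ≤ N) (hθ : 0 < θ) (hθ4 : θ ≤ 1 / 4) (hNθ : 1 / N ≤ c * θ)
  (hu : |u - θ| ≤ c * θ)
include hN hθ hθ4 hNθ hu

lemma abs_div_sub_one_mul_sub_le : |N / (N - 1) * u - θ| ≤ 4 * (c * θ) := by
  obtain ⟨hr1, hr2⟩ := one_le_div_sub_one_and_sub_one_le hN
  set r := N / (N - 1)
  have hr : r ≤ 2 := by linarith [one_div_le_one_div_of_le (by norm_num : (0:ℝ) < 12) hN]
  have hc : 0 ≤ c * θ := (one_div_pos.2 (by linarith)).le.trans hNθ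
  have hrθ : (r - 1) * θ ≤ c * θ / 2 := by
    nlinarith [mul_le_mul_of_nonneg_right hr2 hθ.le, mul_le_mul_of_nonneg_left hθ4 hc]
  rw [show r * u - θ = r * (u - θ) + (r - 1) * θ by ring]
  calc |r * (u - θ) + (r - 1) * θ| ≤ r * (c * θ) + (r - 1) * θ := by
        refine (abs_add_le _ _).trans (add_le_add ?_ (abs_of_nonneg (by nlinarith)).le)
        rw [abs_mul, abs_of_nonneg (by linarith)]
        exact mul_le_mul_of_nonneg_left hu (by linarith)
    _ ≤ 4 * (c * θ) := by nlinarith [mul_le_mul_of_nonneg_right hr hc]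

lemma abs_cube_div_mul_sub_sq_le (hc1 : c ≤ 1) :
    |N ^ 3 / ((N - 1) * (N - 2) * (N - 3)) * (u * (u - 1 / N + (1 / N) ^ 2)) - θ ^ 2|
      ≤ 15 * (c * θ ^ 2) := by
  obtain ⟨hK1, hK2⟩ := one_le_cube_div_and_sub_one_le hN
  set K := N ^ 3 / ((N - 1) * (N - 2) * (N - 3))
  set e := 1 / N
  have he0 : 0 < e := one_div_pos.2 (by linarith)
  have he : e ≤ 1 / 12 := one_div_le_one_div_of_le (by norm_num) hN
  have hc : 0 ≤ c * θ := he0.le.trans hNθ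
  have hc2 : 0 ≤ c * θ ^ 2 := by rw [sq, ← mul_assoc]; exact mul_nonneg hc hθ.le
  obtain ⟨hu1, hu2⟩ := abs_le.1 hu
  have hcθ : c * θ ≤ θ := by nlinarith
  have hR : |u * (u - e + e ^ 2) - θ ^ 2| ≤ 5 * (c * θ ^ 2) := by
    have hsq : |u ^ 2 - θ ^ 2| ≤ 3 * (c * θ ^ 2) := by
      rw [show u ^ 2 - θ ^ 2 = (u - θ) * (u + θ) by ring, abs_mul,
        abs_of_nonneg (by linarith : 0 ≤ u + θ)]
      nlinarith [mul_le_mul_of_nonneg_right hu (by linarith : 0 ≤ u + θ)]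
    have hlin : u * (e * (1 - e)) ≤ 2 * (c * θ ^ 2) := by
      nlinarith [mul_le_mul (by linarith : u ≤ 2 * θ) hNθ he0.le (by linarith),
        mul_nonneg (by linarith : 0 ≤ u) (mul_nonneg he0.le he0.le)]
    have hlin0 : 0 ≤ u * (e * (1 - e)) :=
      mul_nonneg (by linarith) (mul_nonneg he0.le (by linarith))
    rw [show u * (u - e + e ^ 2) - θ ^ 2 = (u ^ 2 - θ ^ 2) - u * (e * (1 - e)) by ring]
    calc |(u ^ 2 - θ ^ 2) - u * (e * (1 - e))|
        ≤ |u ^ 2 - θ ^ 2| + |u * (e * (1 - e))| := abs_sub _ _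
      _ ≤ 5 * (c * θ ^ 2) := by rw [abs_of_nonneg hlin0]; linarith
  have hK : (K - 1) * θ ^ 2 ≤ 15 / 4 * (c * θ ^ 2) := by
    nlinarith [mul_le_mul_of_nonneg_right hK2 (sq_nonneg θ),
      mul_le_mul_of_nonneg_right hNθ (sq_nonneg θ), mul_le_mul_of_nonneg_left hθ4 hc2]
  rw [show K * (u * (u - e + e ^ 2)) - θ ^ 2
      = K * (u * (u - e + e ^ 2) - θ ^ 2) + (K - 1) * θ ^ 2 by ring]
  calc |K * (u * (u - e + e ^ 2) - θ ^ 2) + (K - 1) * θ ^ 2|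
      ≤ K * (5 * (c * θ ^ 2)) + (K - 1) * θ ^ 2 := by
        refine (abs_add_le _ _).trans (add_le_add ?_ (abs_of_nonneg (by positivity)).le)
        rw [abs_mul, abs_of_nonneg (by linarith)]
        exact mul_le_mul_of_nonneg_left hR (by linarith)
    _ ≤ 15 * (c * θ ^ 2) := by
        nlinarith [mul_le_mul_of_nonneg_right (hK2.trans (by linarith : 15 * e ≤ 5 / 4))
          hc2]

end Perturbation

namespace BinSetup

attribute [local instance] BinSetup.prob

section Pooled

variable (S : BinSetup)

lemma pbarHat_eq_sum_mul_inv :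
    S.pbarHat = fun ω => (∑ i ∈ range S.k, (S.X i ω : ℝ)) * S.Nreal⁻¹ := by
  refine funext fun ω => congrArg (· * S.Nreal⁻¹) (sum_congr rfl fun i hi => ?_)
  have : (S.n i : ℝ) ≠ 0 := by have := S.hn i hi; positivity
  exact mul_div_cancel₀ _ this

lemma memLp_pbarHat : MemLp S.pbarHat 2 S.μ := by
  rw [pbarHat_eq_sum_mul_inv]
  exact (memLp_finsetSum _ fun i hi => (S.hbin i hi).memLp (S.hmeas i) 2).mul_const _

lemma integral_pbarHat : ∫ ω, S.pbarHat ω ∂S.μ = S.pbar := by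
  rw [pbarHat_eq_sum_mul_inv, integral_mul_const,
    integral_finsetSum _ fun i hi => ((S.hbin i hi).memLp (S.hmeas i) 1).integrable le_rfl,
    pbar, div_eq_mul_inv]
  exact congrArg (· * _) (sum_congr rfl fun i hi => (S.hbin i hi).integral_eq (S.hmeas i))

lemma variance_pbarHat :
    variance S.pbarHat S.μ = (∑ i ∈ range S.k, (S.n i : ℝ) * S.theta i) / S.Nreal ^ 2 := by
  have hpair : Set.Pairwise ↑(range S.k)
      fun i j => IndepFun (fun ω => (S.X i ω : ℝ)) (fun ω => (S.X j ω : ℝ)) S.μ :=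
    fun i _ j _ hij =>
      (S.hindep.comp (fun _ m => (m : ℝ)) fun _ => measurable_from_top).indepFun hij
  have hsum := IndepFun.variance_sum (fun i hi => (S.hbin i hi).memLp (S.hmeas i) 2) hpair
  rw [sum_fn] at hsum
  rw [pbarHat_eq_sum_mul_inv, variance_mul_const, hsum, div_eq_mul_inv, inv_pow]
  exact congrArg (· * _) (sum_congr rfl fun i hi => (S.hbin i hi).variance_eq (S.hmeas i))

lemma measure_le_abs_pbarHat_sub_pbar_le {t : ℝ} (ht : 0 < t) :
    (S.μ {ω | t ≤ |S.pbarHat ω - S.pbar|}).toReal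
      ≤ (∑ i ∈ range S.k, (S.n i : ℝ) * S.theta i) / (S.Nreal ^ 2 * t ^ 2) := by
  have h := ENNReal.toReal_le_of_le_ofReal (div_nonneg (variance_nonneg _ _) (sq_nonneg t))
    (meas_ge_le_variance_div_sq S.memLp_pbarHat ht)
  rwa [integral_pbarHat, variance_pbarHat, div_div] at h

end Pooled

variable {S : BinSetup}

lemma Nreal_pos (hk : 0 < S.k) : 0 < S.Nreal :=
  sum_pos (fun i hi => by have := S.hn i hi; positivity) (nonempty_range_iff.2 hk.ne')

lemma n_le_Nreal {i : ℕ} (hi : i ∈ range S.k) : (S.n i : ℝ) ≤ S.Nreal :=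
  single_le_sum (f := fun j => (S.n j : ℝ)) (fun _ _ => by positivity) hi

lemma pbar_eq_of_forall_pi_eq {p : ℝ} (hH0 : ∀ i ∈ range S.k, S.pi i = p) (hk : 0 < S.k) :
    S.pbar = p := by
  rw [pbar, sum_congr rfl fun i hi => by rw [hH0 i hi], ← sum_mul, ← Nreal,
    mul_div_cancel_left₀ _ (Nreal_pos hk).ne']

lemma pbar_mul_one_sub_pbar_pos {p : ℝ} (hH0 : ∀ i ∈ range S.k, S.pi i = p) (hk : 0 < S.k) :
    0 < S.pbar * (1 - S.pbar) := by
  have h := S.hpi 0 (mem_range.2 hk)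
  rw [hH0 0 (mem_range.2 hk), ← pbar_eq_of_forall_pi_eq hH0 hk] at h
  exact mul_pos h.1 (sub_pos.2 h.2)

lemma sum_A2 (hN : S.Nreal ≠ 0) : ∑ i ∈ range S.k, S.A2 i = 1 / S.Nreal := by
  rw [show ∑ i ∈ range S.k, S.A2 i = S.Nreal / S.Nreal ^ 2 from (sum_div ..).symm, sq,
    div_mul_cancel_left₀ hN, one_div]

lemma A1_nonneg (hN : 4 ≤ S.Nreal) {i : ℕ} (hi : i ∈ range S.k) : 0 ≤ S.A1 i := by
  have hN0 : 0 < S.Nreal := by linarith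
  have hnN : (S.n i : ℝ) / S.Nreal ≤ 1 := (div_le_one hN0).2 (n_le_Nreal hi)
  have hnN0 : 0 ≤ (S.n i : ℝ) / S.Nreal := by positivity
  rcases (S.hn i hi).eq_or_lt with h2 | h3
  · have hn : (S.n i : ℝ) = 2 := by exact_mod_cast h2.symm
    have hd : 1 ≤ S.d i := by
      have : 2 / S.Nreal ≤ 1 / 2 := by rw [div_le_iff₀ hN0]; linarith
      rw [d, hn, show (2 : ℝ) / (2 - 1) = 2 by norm_num]
      linarith
    rw [A1, hn]
    nlinarith
  · have hn : (3 : ℝ) ≤ S.n i := by exact_mod_cast h3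
    have hr0 : 0 ≤ (S.n i : ℝ) / (S.n i - 1) := div_nonneg (by linarith) (by linarith)
    have hd0 : 0 ≤ S.d i := mul_nonneg hr0 (by linarith)
    have hd : S.d i ≤ 3 / 2 := by
      have : (S.n i : ℝ) / (S.n i - 1) ≤ 3 / 2 := by
        rw [div_le_div_iff₀ (by linarith) (by norm_num)]; linarith
      exact (mul_le_of_le_one_right hr0 (by linarith)).trans this
    have hbracket :
        0 ≤ 12 * (S.n i : ℝ) * (S.n i - 1) - S.d i * ((S.n i : ℝ) ^ 2 - 8 * S.n i + 6) := by
      nlinarith [mul_le_mul_of_nonneg_right hd (sq_nonneg (S.n i : ℝ))]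
    rw [A1, show 2 - 6 / (S.n i : ℝ) - S.d i ^ 2 / S.n i + 8 * S.d i ^ 2 / (S.n i) ^ 2
        - 6 * S.d i ^ 2 / (S.n i) ^ 3 + 12 * S.d i * ((S.n i : ℝ) - 1) / (S.n i) ^ 2
        = (2 * (S.n i : ℝ) ^ 2 * (S.n i - 3) + S.d i * (12 * (S.n i : ℝ) * (S.n i - 1)
          - S.d i * ((S.n i : ℝ) ^ 2 - 8 * S.n i + 6))) / (S.n i) ^ 3 by
        field_simp; ring]
    have : 0 ≤ (S.n i : ℝ) - 3 := by linarith
    positivity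

lemma V1star_eq (hN : S.Nreal ≠ 0) :
    S.V1star = (S.pbar * (1 - S.pbar)) ^ 2 * ∑ i ∈ range S.k, S.A1 i
      + S.pbar * (1 - S.pbar) / S.Nreal := by
  rw [V1star, sum_A2 hN, mul_one_div]

lemma V1star_pos (hN : 4 ≤ S.Nreal) (hθ : 0 < S.pbar * (1 - S.pbar)) : 0 < S.V1star := by
  rw [V1star_eq (by linarith)]
  have := sum_nonneg fun i hi => A1_nonneg hN hi
  have : 0 < S.pbar * (1 - S.pbar) / S.Nreal := div_pos hθ (by linarith)
  positivity

lemma V1starHat_eq (ω : S.Ω) :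
    S.V1starHat ω
      = (∑ i ∈ range S.k, S.A2 i) * (S.etaHatPooled 1 ω - S.etaHatPooled 2 ω)
        + (∑ i ∈ range S.k, S.A1 i)
          * (S.etaHatPooled 2 ω - 2 * S.etaHatPooled 3 ω + S.etaHatPooled 4 ω) := by
  simp only [V1starHat, sum_mul, ← sum_add_distrib]
  refine sum_congr rfl fun i _ => ?_
  norm_num [show Icc 1 4 = {1, 2, 3, 4} from rfl, a]
  ring

lemma etaHatPooled_one_sub_two (hN : 1 < S.Nreal) (ω : S.Ω) :
    S.etaHatPooled 1 ω - S.etaHatPooled 2 ω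
      = S.Nreal / (S.Nreal - 1) * (S.pbarHat ω * (1 - S.pbarHat ω)) := by
  have h0 : S.Nreal ≠ 0 := by linarith
  have h1 : S.Nreal - 1 ≠ 0 := by linarith
  simp only [etaHatPooled, prod_range_succ, prod_range_zero, Nat.cast_zero, Nat.cast_one,
    sub_zero, zero_div, one_mul]
  field_simp
  ring

lemma etaHatPooled_two_sub_two_mul_three_add_four (hN : 4 ≤ S.Nreal) (ω : S.Ω) :
    S.etaHatPooled 2 ω - 2 * S.etaHatPooled 3 ω + S.etaHatPooled 4 ω
      = S.Nreal ^ 3 / ((S.Nreal - 1) * (S.Nreal - 2) * (S.Nreal - 3))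
        * (S.pbarHat ω * (1 - S.pbarHat ω)
          * (S.pbarHat ω * (1 - S.pbarHat ω) - 1 / S.Nreal + (1 / S.Nreal) ^ 2)) := by
  have h0 : S.Nreal ≠ 0 := by linarith
  have h1 : S.Nreal - 1 ≠ 0 := by linarith
  have h2 : S.Nreal - 2 ≠ 0 := by linarith
  have h3 : S.Nreal - 3 ≠ 0 := by linarith
  simp only [etaHatPooled, prod_range_succ, prod_range_zero, Nat.cast_zero, Nat.cast_one,
    Nat.cast_ofNat, sub_zero, zero_div, one_mul]
  field_simp
  ring

lemma abs_V1starHat_sub_V1star_le (hN : 12 ≤ S.Nreal) {c : ℝ} (hc : c ≤ 1)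
    (hθ : 0 < S.pbar * (1 - S.pbar)) (hNθ : 1 / S.Nreal ≤ c * (S.pbar * (1 - S.pbar)))
    {ω : S.Ω} (hω : |S.pbarHat ω - S.pbar| ≤ c * (S.pbar * (1 - S.pbar))) :
    |S.V1starHat ω - S.V1star| ≤ 19 * c * S.V1star := by
  set θ := S.pbar * (1 - S.pbar)
  set A := ∑ i ∈ range S.k, S.A1 i
  have hA : 0 ≤ A := sum_nonneg fun i hi => A1_nonneg (by linarith) hi
  have hθ4 : θ ≤ 1 / 4 := by nlinarith [sq_nonneg (S.pbar - 1 / 2)]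
  have hc0 : 0 ≤ c * θ := (one_div_pos.2 (by linarith)).le.trans hNθ
  have hu := abs_mul_one_sub_sub_mul_one_sub_le hω (by nlinarith)
  have hL := abs_div_sub_one_mul_sub_le hN hθ hθ4 hNθ hu
  have hQ := abs_cube_div_mul_sub_sq_le hN hθ hθ4 hNθ hu hc
  set L := S.Nreal / (S.Nreal - 1) * (S.pbarHat ω * (1 - S.pbarHat ω)) - θ
  set Q := S.Nreal ^ 3 / ((S.Nreal - 1) * (S.Nreal - 2) * (S.Nreal - 3))
      * (S.pbarHat ω * (1 - S.pbarHat ω) * (S.pbarHat ω * (1 - S.pbarHat ω) - 1 / S.Nreal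
        + (1 / S.Nreal) ^ 2)) - θ ^ 2
  have hdecomp : S.V1starHat ω - S.V1star = 1 / S.Nreal * L + A * Q := by
    rw [V1starHat_eq, etaHatPooled_one_sub_two (by linarith),
      etaHatPooled_two_sub_two_mul_three_add_four (by linarith), V1star_eq (by linarith),
      sum_A2 (by linarith)]
    ring
  rw [hdecomp, V1star_eq (by linarith)]
  have hN0 : 0 ≤ 1 / S.Nreal := one_div_nonneg.2 (by linarith)
  calc |1 / S.Nreal * L + A * Q| ≤ 1 / S.Nreal * (4 * (c * θ)) + A * (15 * (c * θ ^ 2)) := by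
        refine (abs_add_le _ _).trans (add_le_add ?_ ?_)
        · rw [abs_mul, abs_of_nonneg hN0]
          exact mul_le_mul_of_nonneg_left hL hN0
        · rw [abs_mul, abs_of_nonneg hA]
          exact mul_le_mul_of_nonneg_left hQ hA
    _ ≤ 19 * c * (θ ^ 2 * A + θ / S.Nreal) := by
        rw [div_eq_mul_one_div θ]
        nlinarith [mul_nonneg hc0 hN0, mul_nonneg (mul_nonneg hc0 hθ.le) hA]

lemma measure_le_abs_V1starHat_div_V1star_sub_one_le {p c ε : ℝ}
    (hH0 : ∀ i ∈ range S.k, S.pi i = p) (hk : 0 < S.k) (hc : c ≤ 1 / 3) (hcε : 19 * c < ε)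
    (hNθ : 1 / (S.Nreal * (S.pbar * (1 - S.pbar))) ≤ c) :
    (S.μ {ω | ε ≤ |S.V1starHat ω / S.V1star - 1|}).toReal
      ≤ 1 / c ^ 2 * (1 / (S.Nreal * (S.pbar * (1 - S.pbar)))) := by
  have hθ := pbar_mul_one_sub_pbar_pos hH0 hk
  rw [← pbar_eq_of_forall_pi_eq hH0 hk] at hH0
  set θ := S.pbar * (1 - S.pbar)
  have hN0 := Nreal_pos hk
  have hθ4 : θ ≤ 1 / 4 := by nlinarith [sq_nonneg (S.pbar - 1 / 2)]
  have hNθ' : 1 / S.Nreal ≤ c * θ := by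
    rw [div_le_iff₀ (mul_pos hN0 hθ)] at hNθ
    rw [div_le_iff₀ hN0]
    linarith
  have hc0 : 0 < c := (by positivity : 0 < 1 / (S.Nreal * θ)).trans_le hNθ
  have hN : 12 ≤ S.Nreal := by
    rw [div_le_iff₀ hN0] at hNθ'
    nlinarith [mul_le_mul_of_nonneg_left hθ4 hc0.le]
  have hsub : {ω | ε ≤ |S.V1starHat ω / S.V1star - 1|}
      ⊆ {ω | c * θ ≤ |S.pbarHat ω - S.pbar|} := by
    intro ω hω
    by_contra hlt
    have hV := V1star_pos (by linarith) hθ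
    have h := abs_V1starHat_sub_V1star_le hN (by linarith) hθ hNθ' (not_le.1 hlt).le
    have hratio : |S.V1starHat ω / S.V1star - 1| ≤ 19 * c := by
      rwa [div_sub_one hV.ne', abs_div, abs_of_pos hV, div_le_iff₀ hV]
    exact absurd (hω.trans hratio) (not_le.2 hcε)
  have hvar : ∑ i ∈ range S.k, (S.n i : ℝ) * S.theta i = S.Nreal * θ := by
    rw [Nreal, sum_mul]
    exact sum_congr rfl fun i hi => by rw [theta, hH0 i hi]
  calc (S.μ {ω | ε ≤ |S.V1starHat ω / S.V1star - 1|}).toReal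
      ≤ (S.μ {ω | c * θ ≤ |S.pbarHat ω - S.pbar|}).toReal :=
        ENNReal.toReal_mono (measure_ne_top _ _) (measure_mono hsub)
    _ ≤ S.Nreal * θ / (S.Nreal ^ 2 * (c * θ) ^ 2) :=
        hvar ▸ S.measure_le_abs_pbarHat_sub_pbar_le (by positivity)
    _ = 1 / c ^ 2 * (1 / (S.Nreal * θ)) := by field_simp

end BinSetup

theorem stmt_7_general (S : ℕ → BinSetup) (hSk : ∀ k, (S k).k = k)
    (p : ℕ → ℝ) (hH0 : ∀ k, ∀ i ∈ Finset.range (S k).k, (S k).pi i = p k)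
    (hc : Tendsto (fun k : ℕ =>
        (((S k).pbar * (1 - (S k).pbar)) ^ 3 * ∑ i ∈ Finset.range (S k).k, 1 / ((S k).n i : ℝ)
            + ((S k).pbar * (1 - (S k).pbar))
                * ∑ i ∈ Finset.range (S k).k, 1 / ((S k).n i : ℝ) ^ 3)
          / ((k : ℝ) * ((S k).pbar * (1 - (S k).pbar)) ^ 2
              + ((S k).pbar * (1 - (S k).pbar)) / (S k).Nreal ^ 2
                  * ∑ i ∈ Finset.range (S k).k, 1 / ((S k).n i : ℝ)) ^ 2)
      atTop (nhds 0)) :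
    ∀ ε : ℝ, 0 < ε →
      Tendsto (fun k : ℕ =>
          ((S k).μ {ω | ε ≤ |(S k).V1starHat ω / (S k).V1star - 1|}).toReal)
        atTop (nhds 0) := by
  intro ε hε
  have hpos (k : ℕ) (hk : 1 ≤ k) : 0 < (S k).k := by rw [hSk]; exact hk
  have hθ (k : ℕ) (hk : 1 ≤ k) := BinSetup.pbar_mul_one_sub_pbar_pos (hH0 k) (hpos k hk)
  have hlim : Tendsto (fun k => 1 / ((S k).Nreal * ((S k).pbar * (1 - (S k).pbar))))
      atTop (nhds 0) := by
    refine squeeze_zero' ?_ ?_ (mul_zero (2 : ℝ) ▸ hc.const_mul 2)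
    all_goals filter_upwards [eventually_ge_atTop 1] with k hk
    · have := BinSetup.Nreal_pos (hpos k hk)
      have := hθ k hk
      positivity
    · have h := one_div_le_two_mul_condition_ratio (nonempty_range_iff.2 (hpos k hk).ne')
        (fun i hi => Nat.one_le_cast.2 (one_le_two.trans ((S k).hn i hi))) (hθ k hk)
      rwa [show (#(range (S k).k) : ℝ) = k by rw [card_range, hSk]] at h
  obtain ⟨c, hc0, hc, hcε⟩ : ∃ c : ℝ, 0 < c ∧ c ≤ 1 / 3 ∧ 19 * c < ε :=
    ⟨min ε 1 / 20, div_pos (lt_min hε one_pos) (by norm_num), by linarith [min_le_right ε 1],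
      by linarith [min_le_left ε 1]⟩
  refine squeeze_zero' (Eventually.of_forall fun _ => ENNReal.toReal_nonneg) ?_
    (mul_zero (1 / c ^ 2) ▸ hlim.const_mul (1 / c ^ 2))
  filter_upwards [eventually_ge_atTop 1, hlim.eventually (ge_mem_nhds hc0)] with k hk hNθ
  exact BinSetup.measure_le_abs_V1starHat_div_V1star_sub_one_le (hH0 k) (hpos k hk) hc hcε hNθ

/-- ratio consistency of the pooled estimator `𝒱̂_{1*}`: under `H₀` with
`π ≤ δ < 1`, `nᵢ ≥ 2` and the stated condition (with `θ̃ = π̄(1−π̄)`),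
`𝒱̂_{1*}/𝒱_{1*} → 1` in probability as `k → ∞`. -/
theorem stmt_7 (S : ℕ → BinSetup) (hSk : ∀ k, (S k).k = k)
    (p : ℕ → ℝ) (hH0 : ∀ k, ∀ i ∈ Finset.range (S k).k, (S k).pi i = p k)
    (hp : ∀ k, 0 < p k) (δ : ℝ) (hδ : δ < 1) (hpδ : ∀ k, p k ≤ δ)
    (hc : Tendsto (fun k : ℕ =>
        (((S k).pbar * (1 - (S k).pbar)) ^ 3 * ∑ i ∈ Finset.range (S k).k, 1 / ((S k).n i : ℝ)
            + ((S k).pbar * (1 - (S k).pbar))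
                * ∑ i ∈ Finset.range (S k).k, 1 / ((S k).n i : ℝ) ^ 3)
          / ((k : ℝ) * ((S k).pbar * (1 - (S k).pbar)) ^ 2
              + ((S k).pbar * (1 - (S k).pbar)) / (S k).Nreal ^ 2
                  * ∑ i ∈ Finset.range (S k).k, 1 / ((S k).n i : ℝ)) ^ 2)
      atTop (nhds 0)) :
    ∀ ε : ℝ, 0 < ε →
      Tendsto (fun k : ℕ =>
          ((S k).μ {ω | ε ≤ |(S k).V1starHat ω / (S k).V1star - 1|}).toReal)
        atTop (nhds 0) :=
  stmt_7_general S hSk p hH0 hc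
end
end

section
/- Let X₁,…,X_k be independent with X_i ~ Binomial(n_i, π_i), n_i ≥ 2. Then E[ Σ_{i=1}^k n_i(π̂_i − π̂̄)² ] = Σ_{i=1}^k (1 − n_i/N)·π_i(1−π_i) + Σ_{i=1}^k n_i(π_i − π̄)², so the plug-in statistic overestimates Σ n_i(π_i − π̄)² by Σ (1 − n_i/N)π_i(1−π_i). Consequently, the bias-corrected statistic T = Σ_{i=1}^k n_i(π̂_i − π̂̄)² − Σ_{i=1}^k d_i π̂_i(1−π̂_i), with d_i = (n_i/(n_i−1))(1 − n_i/N), satisfies E[T] = Σ_{i=1}^k n_i(π_i − π̄)²; in particular E[T] ≥ 0 with equality if and only if π₁ = ⋯ = π_k. -/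
noncomputable section

open MeasureTheory ProbabilityTheory Filter

/-! The plug-in statistic is a weighted spread `Σ wᵢ (Zᵢ - Z̄)²` of the independent estimators
`Zᵢ = π̂ᵢ`, with `E Zᵢ = πᵢ` and `Var Zᵢ = πᵢ(1 - πᵢ)/nᵢ` (binomial moments, read off from the
Bernstein polynomial identities). Writing the spread as `Σ wᵢ Zᵢ² - (Σ wᵢ Zᵢ)² / W` and using
`E Y² = Var Y + (E Y)²` for each `Zᵢ` and for `Σ wᵢ Zᵢ`, whose variance is additive by
independence, gives the spread of the means plus the excess `Σ (1 - wᵢ/W) wᵢ Var Zᵢ`.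
That excess is removed by the correction term since `E[π̂(1 - π̂)] = π(1 - π)(n - 1)/n`. -/

open scoped unitInterval

namespace ProbabilityTheory

lemma sum_binomial_weights_smul_eq (n : ℕ) (p : ℝ) (f : ℕ → ℝ) :
    ∑ k ∈ Finset.Iic n, (n.choose k * p ^ k * (1 - p) ^ (n - k)) • f k =
      ∑ k ∈ Finset.range (n + 1), f k * (bernsteinPolynomial ℝ n k).eval p := by
  rw [Nat.range_succ_eq_Iic]
  refine Finset.sum_congr rfl fun k _ => ?_
  simp only [bernsteinPolynomial, smul_eq_mul, Polynomial.eval_mul, Polynomial.eval_pow,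
    Polynomial.eval_sub, Polynomial.eval_one, Polynomial.eval_X, Polynomial.eval_natCast]
  ring

lemma integral_natCast_binomial (n : ℕ) (p : I) : ∫ k, (k : ℝ) ∂Bin(n, p) = n * p := by
  rw [integral_binomial, sum_binomial_weights_smul_eq]
  simpa [Polynomial.eval_finsetSum, mul_comm] using
    congrArg (Polynomial.eval (p : ℝ)) (bernsteinPolynomial.sum_smul (R := ℝ) n)

lemma variance_natCast_binomial (n : ℕ) (p : I) :
    Var[fun k : ℕ => (k : ℝ); Bin(n, p)] = n * p * (1 - p) := by
  have hbern := congrArg (Polynomial.eval (p : ℝ)) (bernsteinPolynomial.variance (R := ℝ) n)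
  simp only [Polynomial.eval_finsetSum, Polynomial.eval_mul, Polynomial.eval_pow,
    Polynomial.eval_sub, Polynomial.eval_X, Polynomial.eval_natCast,
    Polynomial.eval_one, nsmul_eq_mul] at hbern
  rw [variance_eq_integral (by fun_prop), integral_natCast_binomial, integral_binomial,
    sum_binomial_weights_smul_eq, ← hbern]
  exact Finset.sum_congr rfl fun k _ => by ring

namespace HasLaw
variable {Ω : Type*} [MeasurableSpace Ω] {μ : Measure Ω} {X : Ω → ℕ} {n : ℕ} {p : I}

lemma memLp_natCast_binomial [IsFiniteMeasure μ] (hX : HasLaw X Bin(n, p) μ) (q : ENNReal) :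
    MemLp (fun ω => (X ω : ℝ)) q μ := by
  have hcast : Measurable fun k : ℕ => (k : ℝ) := .of_discrete
  refine MemLp.of_bound (hcast.comp_aemeasurable hX.aemeasurable).aestronglyMeasurable n ?_
  filter_upwards [ae_le_of_hasLaw_binomial hX] with ω hω
  simpa using hω

lemma integral_natCast_binomial (hX : HasLaw X Bin(n, p) μ) :
    μ[fun ω => (X ω : ℝ)] = n * (p : ℝ) := by
  rw [← ProbabilityTheory.integral_natCast_binomial]
  exact hX.integral_comp (f := fun k : ℕ => (k : ℝ)) (by fun_prop)

lemma variance_natCast_binomial (hX : HasLaw X Bin(n, p) μ) :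
    Var[fun ω => (X ω : ℝ); μ] = n * (p : ℝ) * (1 - p) := by
  rw [← ProbabilityTheory.variance_natCast_binomial, ← hX.map_eq,
    variance_map (by fun_prop) hX.aemeasurable]
  rfl

end HasLaw

end ProbabilityTheory

lemma IsBinomial.hasLaw {Ω : Type*} [MeasurableSpace Ω] {μ : Measure Ω} [IsFiniteMeasure μ]
    {X : Ω → ℕ} {n : ℕ} {p : I} (hX : Measurable X) (h : IsBinomial μ X n p) :
    HasLaw X Bin(n, p) μ where
  map_eq := by
    refine Measure.ext_of_singleton fun k => ?_
    rw [Measure.map_apply hX (measurableSet_singleton k), binomial_singleton, ← h k,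
      ENNReal.ofReal_toReal (measure_ne_top _ _)]
    rfl

namespace Finset
variable {ι : Type*} (s : Finset ι) (w a : ι → ℝ)

theorem sum_mul_sub_weightedMean_sq :
    ∑ i ∈ s, w i * (a i - (∑ j ∈ s, w j * a j) / ∑ j ∈ s, w j) ^ 2
      = ∑ i ∈ s, w i * a i ^ 2 - (∑ i ∈ s, w i * a i) ^ 2 / ∑ i ∈ s, w i := by
  set W := ∑ j ∈ s, w j
  set A := ∑ j ∈ s, w j * a j
  have expand : ∑ i ∈ s, w i * (a i - A / W) ^ 2
      = ∑ i ∈ s, w i * a i ^ 2 - 2 * (A / W) * A + (A / W) ^ 2 * W := by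
    simp only [W, A, Finset.mul_sum, ← Finset.sum_sub_distrib, ← Finset.sum_add_distrib]
    exact Finset.sum_congr rfl fun i _ => by ring
  rw [expand]
  rcases eq_or_ne W 0 with hW | hW
  · simp [hW]
  · field_simp
    ring

theorem sum_mul_sub_weightedMean_sq_eq_zero_iff (hw : ∀ i ∈ s, 0 < w i) :
    ∑ i ∈ s, w i * (a i - (∑ j ∈ s, w j * a j) / ∑ j ∈ s, w j) ^ 2 = 0 ↔
      ∀ i ∈ s, ∀ j ∈ s, a i = a j := by
  have hterm : ∀ i ∈ s, 0 ≤ w i * (a i - (∑ j ∈ s, w j * a j) / ∑ j ∈ s, w j) ^ 2 :=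
    fun i hi => mul_nonneg (hw i hi).le (sq_nonneg _)
  rw [Finset.sum_eq_zero_iff_of_nonneg hterm]
  constructor
  · intro h i hi j hj
    have hmean : ∀ l ∈ s, a l = (∑ j ∈ s, w j * a j) / ∑ j ∈ s, w j := fun l hl => by
      simpa [(hw l hl).ne', sub_eq_zero] using h l hl
    rw [hmean i hi, hmean j hj]
  · intro h i hi
    have hW : (∑ j ∈ s, w j) ≠ 0 := (Finset.sum_pos hw ⟨i, hi⟩).ne'
    have hA : ∑ j ∈ s, w j * a j = a i * ∑ j ∈ s, w j := by
      rw [Finset.mul_sum]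
      exact Finset.sum_congr rfl fun j hj => by rw [h j hj i hi, mul_comm]
    rw [hA, mul_div_cancel_right₀ _ hW, sub_self]
    ring

end Finset

namespace MeasureTheory
variable {Ω ι : Type*} [MeasurableSpace Ω] {μ : Measure Ω}

lemma MemLp.integrable_mul_one_sub [IsFiniteMeasure μ] {Z : Ω → ℝ} (hZ : MemLp Z 2 μ) :
    Integrable (fun ω => Z ω * (1 - Z ω)) μ :=
  hZ.integrable_mul ((memLp_const 1).sub hZ)

lemma integrable_sum_mul_sub_weightedMean_sq {s : Finset ι} {Z : ι → Ω → ℝ} (w : ι → ℝ)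
    (hZ : ∀ i ∈ s, MemLp (Z i) 2 μ) :
    Integrable
      (fun ω => ∑ i ∈ s, w i * (Z i ω - (∑ j ∈ s, w j * Z j ω) / ∑ j ∈ s, w j) ^ 2) μ := by
  have hmean : MemLp (fun ω => (∑ j ∈ s, w j * Z j ω) / ∑ j ∈ s, w j) 2 μ := by
    simpa only [div_eq_mul_inv] using
      (memLp_finsetSum s fun j hj => (hZ j hj).const_mul (w j)).mul_const (∑ j ∈ s, w j)⁻¹
  exact integrable_finsetSum s fun i hi => ((hZ i hi).sub hmean).integrable_sq.const_mul (w i)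

end MeasureTheory

namespace ProbabilityTheory
variable {Ω ι : Type*} [MeasurableSpace Ω] {μ : Measure Ω} [IsProbabilityMeasure μ]

lemma integral_sq_eq_variance_add_sq {Z : Ω → ℝ} (hZ : MemLp Z 2 μ) :
    ∫ ω, Z ω ^ 2 ∂μ = Var[Z; μ] + μ[Z] ^ 2 := by
  rw [variance_eq_sub hZ]
  simp only [Pi.pow_apply]
  ring

lemma integral_mul_one_sub {Z : Ω → ℝ} (hZ : MemLp Z 2 μ) :
    ∫ ω, Z ω * (1 - Z ω) ∂μ = μ[Z] * (1 - μ[Z]) - Var[Z; μ] := by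
  have hexp : (fun ω => Z ω * (1 - Z ω)) = fun ω => Z ω - Z ω ^ 2 := by
    funext ω; ring
  rw [hexp, integral_sub (hZ.integrable one_le_two) hZ.integrable_sq,
    integral_sq_eq_variance_add_sq hZ]
  ring

theorem integral_sum_mul_sub_weightedMean_sq {s : Finset ι} {Z : ι → Ω → ℝ} (w : ι → ℝ)
    (hZ : ∀ i ∈ s, MemLp (Z i) 2 μ) (hindep : Set.Pairwise s fun i j => Z i ⟂ᵢ[μ] Z j) :
    ∫ ω, ∑ i ∈ s, w i * (Z i ω - (∑ j ∈ s, w j * Z j ω) / ∑ j ∈ s, w j) ^ 2 ∂μ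
      = ∑ i ∈ s, w i * (μ[Z i] - (∑ j ∈ s, w j * μ[Z j]) / ∑ j ∈ s, w j) ^ 2
        + ∑ i ∈ s, (1 - w i / ∑ j ∈ s, w j) * (w i * Var[Z i; μ]) := by
  have hwZ : ∀ i ∈ s, MemLp (w i • Z i) 2 μ := fun i hi => (hZ i hi).const_smul (w i)
  have hsum : MemLp (∑ i ∈ s, w i • Z i) 2 μ := memLp_finsetSum' s hwZ
  have hsum_apply : ∀ ω, (∑ i ∈ s, w i • Z i) ω = ∑ i ∈ s, w i * Z i ω := fun ω => by simp
  have hvar : Var[∑ i ∈ s, w i • Z i; μ] = ∑ i ∈ s, w i ^ 2 * Var[Z i; μ] := by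
    rw [IndepFun.variance_sum hwZ fun i hi j hj hij =>
      (hindep hi hj hij).comp (measurable_const_mul (w i)) (measurable_const_mul (w j))]
    exact Finset.sum_congr rfl fun i _ => variance_smul _ _ _
  have hmean : μ[∑ i ∈ s, w i • Z i] = ∑ i ∈ s, w i * μ[Z i] := by
    simp only [hsum_apply]
    rw [integral_finsetSum s fun i hi => ((hZ i hi).integrable one_le_two).const_mul (w i)]
    exact Finset.sum_congr rfl fun i _ => integral_const_mul _ _
  have hsecond : ∑ i ∈ s, ∫ ω, w i * Z i ω ^ 2 ∂μ
      = ∑ i ∈ s, w i * Var[Z i; μ] + ∑ i ∈ s, w i * μ[Z i] ^ 2 := by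
    rw [← Finset.sum_add_distrib]
    refine Finset.sum_congr rfl fun i hi => ?_
    rw [integral_const_mul, integral_sq_eq_variance_add_sq (hZ i hi), mul_add]
  have hcorr : ∑ i ∈ s, (1 - w i / ∑ j ∈ s, w j) * (w i * Var[Z i; μ])
      = ∑ i ∈ s, w i * Var[Z i; μ] - (∑ i ∈ s, w i ^ 2 * Var[Z i; μ]) / ∑ j ∈ s, w j := by
    rw [Finset.sum_div, ← Finset.sum_sub_distrib]
    exact Finset.sum_congr rfl fun i _ => by ring
  simp_rw [Finset.sum_mul_sub_weightedMean_sq, ← hsum_apply]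
  rw [integral_sub (integrable_finsetSum s fun i hi => ((hZ i hi).integrable_sq).const_mul _)
    (hsum.integrable_sq.div_const _), integral_finsetSum s fun i hi =>
      ((hZ i hi).integrable_sq).const_mul _, integral_div, integral_sq_eq_variance_add_sq hsum,
    hvar, hmean, hsecond, hcorr]
  ring

end ProbabilityTheory

namespace BinSetup
variable (S : BinSetup) {i : ℕ}

attribute [local instance] BinSetup.prob

lemma hasLaw (hi : i ∈ Finset.range S.k) :
    HasLaw (S.X i) Bin(S.n i, ⟨S.pi i, (S.hpi i hi).1.le, (S.hpi i hi).2.le⟩) S.μ :=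
  (S.hbin i hi).hasLaw (S.hmeas i)

lemma n_pos (hi : i ∈ Finset.range S.k) : (0 : ℝ) < S.n i := by
  have := S.hn i hi
  positivity

lemma piHat_eq_inv_mul : S.piHat i = fun ω => (S.n i : ℝ)⁻¹ * S.X i ω :=
  funext fun _ => div_eq_inv_mul _ _

lemma memLp_piHat (hi : i ∈ Finset.range S.k) : MemLp (S.piHat i) 2 S.μ := by
  rw [piHat_eq_inv_mul]
  exact ((S.hasLaw hi).memLp_natCast_binomial 2).const_mul _

lemma integral_piHat (hi : i ∈ Finset.range S.k) : S.μ[S.piHat i] = S.pi i := by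
  rw [piHat_eq_inv_mul, integral_const_mul, (S.hasLaw hi).integral_natCast_binomial]
  field_simp [(S.n_pos hi).ne']

lemma variance_piHat (hi : i ∈ Finset.range S.k) : Var[S.piHat i; S.μ] = S.theta i / S.n i := by
  rw [piHat_eq_inv_mul, variance_const_mul, (S.hasLaw hi).variance_natCast_binomial, theta]
  field_simp [(S.n_pos hi).ne']

lemma pairwise_indepFun_piHat :
    Set.Pairwise (Finset.range S.k : Set ℕ) fun i j => S.piHat i ⟂ᵢ[S.μ] S.piHat j :=
  fun i _ j _ hij => (S.hindep.indepFun hij).comp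
    (Measurable.of_discrete (f := fun m : ℕ => (m : ℝ) / S.n i))
    (Measurable.of_discrete (f := fun m : ℕ => (m : ℝ) / S.n j))

lemma integrable_sum_mul_piHat_sub_pbarHat_sq :
    Integrable (fun ω => ∑ i ∈ Finset.range S.k, (S.n i : ℝ) * (S.piHat i ω - S.pbarHat ω) ^ 2)
      S.μ :=
  integrable_sum_mul_sub_weightedMean_sq _ fun _ hi => S.memLp_piHat hi

theorem integral_sum_mul_piHat_sub_pbarHat_sq :
    ∫ ω, (∑ i ∈ Finset.range S.k, (S.n i : ℝ) * (S.piHat i ω - S.pbarHat ω) ^ 2) ∂S.μ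
      = ∑ i ∈ Finset.range S.k, (1 - (S.n i : ℝ) / S.Nreal) * S.theta i
        + ∑ i ∈ Finset.range S.k, (S.n i : ℝ) * (S.pi i - S.pbar) ^ 2 := by
  refine (integral_sum_mul_sub_weightedMean_sq _ (fun i hi => S.memLp_piHat hi)
    S.pairwise_indepFun_piHat).trans ?_
  rw [add_comm]
  congr 1
  · refine Finset.sum_congr rfl fun i hi => ?_
    rw [S.variance_piHat hi, mul_div_cancel₀ _ (S.n_pos hi).ne']
    rfl
  · have hsum : ∑ j ∈ Finset.range S.k, (S.n j : ℝ) * S.μ[S.piHat j]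
        = ∑ j ∈ Finset.range S.k, (S.n j : ℝ) * S.pi j :=
      Finset.sum_congr rfl fun j hj => by rw [S.integral_piHat hj]
    exact Finset.sum_congr rfl fun i hi => by rw [S.integral_piHat hi, hsum]; rfl

lemma integrable_d_mul_piHat_mul_one_sub (hi : i ∈ Finset.range S.k) :
    Integrable (fun ω => S.d i * S.piHat i ω * (1 - S.piHat i ω)) S.μ := by
  simp only [mul_assoc]
  exact (S.memLp_piHat hi).integrable_mul_one_sub.const_mul (S.d i)

theorem integral_sum_d_mul_piHat_mul_one_sub :
    ∫ ω, (∑ i ∈ Finset.range S.k, S.d i * S.piHat i ω * (1 - S.piHat i ω)) ∂S.μ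
      = ∑ i ∈ Finset.range S.k, (1 - (S.n i : ℝ) / S.Nreal) * S.theta i := by
  rw [integral_finsetSum _ fun i hi => S.integrable_d_mul_piHat_mul_one_sub hi]
  refine Finset.sum_congr rfl fun i hi => ?_
  have hn : (2 : ℝ) ≤ S.n i := by exact_mod_cast S.hn i hi
  simp only [mul_assoc]
  rw [integral_const_mul, integral_mul_one_sub (S.memLp_piHat hi), S.integral_piHat hi,
    S.variance_piHat hi, d, theta]
  field_simp [show (S.n i : ℝ) - 1 ≠ 0 by linarith, show (S.n i : ℝ) ≠ 0 by linarith]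

theorem integral_T :
    ∫ ω, S.T ω ∂S.μ = ∑ i ∈ Finset.range S.k, (S.n i : ℝ) * (S.pi i - S.pbar) ^ 2 := by
  unfold T
  rw [integral_sub S.integrable_sum_mul_piHat_sub_pbarHat_sq
      (integrable_finsetSum _ fun i hi => S.integrable_d_mul_piHat_mul_one_sub hi),
    integral_sum_mul_piHat_sub_pbarHat_sq, integral_sum_d_mul_piHat_mul_one_sub,
    add_sub_cancel_left]

end BinSetup

theorem stmt_9_general (S : BinSetup) :
    (∫ ω, (∑ i ∈ Finset.range S.k, (S.n i : ℝ) * (S.piHat i ω - S.pbarHat ω) ^ 2) ∂S.μ)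
      = ∑ i ∈ Finset.range S.k, (1 - (S.n i : ℝ) / S.Nreal) * S.theta i
        + ∑ i ∈ Finset.range S.k, (S.n i : ℝ) * (S.pi i - S.pbar) ^ 2 ∧
    (∫ ω, S.T ω ∂S.μ) = ∑ i ∈ Finset.range S.k, (S.n i : ℝ) * (S.pi i - S.pbar) ^ 2 ∧
    0 ≤ (∫ ω, S.T ω ∂S.μ) ∧
    ((∫ ω, S.T ω ∂S.μ) = 0 ↔
      ∀ i ∈ Finset.range S.k, ∀ j ∈ Finset.range S.k, S.pi i = S.pi j) := by
  refine ⟨S.integral_sum_mul_piHat_sub_pbarHat_sq, S.integral_T, ?_, ?_⟩ <;> rw [S.integral_T]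
  · exact Finset.sum_nonneg fun i hi => mul_nonneg (S.n_pos hi).le (sq_nonneg _)
  · exact Finset.sum_mul_sub_weightedMean_sq_eq_zero_iff _ _ _ fun i hi => S.n_pos hi

/-- the plug-in statistic `Σ nᵢ(π̂ᵢ − π̂̄)²` overestimates
`Σ nᵢ(πᵢ − π̄)²` by `Σ (1 − nᵢ/N)πᵢ(1−πᵢ)`; the bias-corrected statistic `T` is
unbiased for `Σ nᵢ(πᵢ − π̄)²`, which is `≥ 0` with equality iff all `πᵢ` are equal. -/
theorem stmt_9 (S : BinSetup) (hk : 2 ≤ S.k) :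
    (∫ ω, (∑ i ∈ Finset.range S.k, (S.n i : ℝ) * (S.piHat i ω - S.pbarHat ω) ^ 2) ∂S.μ)
      = ∑ i ∈ Finset.range S.k, (1 - (S.n i : ℝ) / S.Nreal) * S.theta i
        + ∑ i ∈ Finset.range S.k, (S.n i : ℝ) * (S.pi i - S.pbar) ^ 2 ∧
    (∫ ω, S.T ω ∂S.μ) = ∑ i ∈ Finset.range S.k, (S.n i : ℝ) * (S.pi i - S.pbar) ^ 2 ∧
    0 ≤ (∫ ω, S.T ω ∂S.μ) ∧
    ((∫ ω, S.T ω ∂S.μ) = 0 ↔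
      ∀ i ∈ Finset.range S.k, ∀ j ∈ Finset.range S.k, S.pi i = S.pi j) :=
  stmt_9_general S
end
end

section
/- Let X ~ Binomial(n, π) with n ≥ 1 and π ∈ (0,1), let π̂ = X/n and θ = π(1−π). Then Cov[(π̂ − π)², π̂(1 − π̂)] = ((n−1)/n³)·θ(1 − 6θ) and Cov[π̂ − π, π̂(1 − π̂)] = ((1 − 2π)θ/n)·(1 − 1/n). -/
noncomputable section

open MeasureTheory ProbabilityTheory

/-!
The factorial moments of `X` are `E[X (X-1) ⋯ (X-k+1)] = n (n-1) ⋯ (n-k+1) pᵏ`.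
Converting powers into falling factorials gives the central moments of `π̂ = X / n`:
`E[D²] = θ/n`, `E[D³] = (1-2p) θ/n²` and `E[D⁴] = θ (1 + 3 (n-2) θ)/n³`, where `D = π̂ - p`.
Since `π̂ (1 - π̂) = θ + (1-2p) D - D²`, the two covariances are
`(1-2p) E[D³] - (E[D⁴] - E[D²]²)` and `(1-2p) E[D²] - E[D³]`.
-/

open Finset

theorem Nat.descFactorial_mul_choose_add (k i j : ℕ) :
    (k + i).descFactorial k * (k + j).choose (k + i) = (k + j).descFactorial k * j.choose i := by
  rw [Nat.descFactorial_eq_factorial_mul_choose, Nat.descFactorial_eq_factorial_mul_choose,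
    mul_assoc, mul_assoc, mul_comm ((k + i).choose k), Nat.choose_mul (Nat.le_add_right k i)]
  simp

theorem Nat.cast_descFactorial_succ {S : Type*} [Ring S] (m k : ℕ) :
    (m.descFactorial (k + 1) : S) = m.descFactorial k * (m - k) := by
  rw [← descPochhammer_eval_eq_descFactorial, descPochhammer_succ_eval,
    descPochhammer_eval_eq_descFactorial]

theorem sum_descFactorial_mul_choose_mul_pow {R : Type*} [CommSemiring R] (a b : R) (n k : ℕ) :
    ∑ m ∈ range (n + 1), (m.descFactorial k : R) * (n.choose m * a ^ m * b ^ (n - m)) =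
      n.descFactorial k * a ^ k * (a + b) ^ (n - k) := by
  rcases le_or_gt k n with hk | hk
  · obtain ⟨j, rfl⟩ := Nat.exists_eq_add_of_le hk
    rw [show k + j + 1 = k + (j + 1) by ring, sum_range_add,
      sum_eq_zero fun m hm => by simp [Nat.descFactorial_eq_zero_iff_lt.2 (mem_range.1 hm)],
      zero_add, Nat.add_sub_cancel_left, add_pow, mul_sum]
    refine sum_congr rfl fun i _ => ?_
    calc _ = ((k + i).descFactorial k * (k + j).choose (k + i) : ℕ) *
          (a ^ k * a ^ i * b ^ (j - i)) := by
          rw [Nat.add_sub_add_left, pow_add]; push_cast; ring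
      _ = _ := by rw [Nat.descFactorial_mul_choose_add]; push_cast; ring
  · simp only [Nat.descFactorial_eq_zero_iff_lt.2 hk, Nat.cast_zero, zero_mul]
    exact sum_eq_zero fun m hm =>
      by simp [Nat.descFactorial_eq_zero_iff_lt.2 ((mem_range.1 hm).trans_le hk)]

def binomialWeight (n : ℕ) (p : ℝ) (m : ℕ) : ℝ := n.choose m * p ^ m * (1 - p) ^ (n - m)

theorem sum_descFactorial_mul_binomialWeight (n k : ℕ) (p : ℝ) :
    ∑ m ∈ range (n + 1), (m.descFactorial k : ℝ) * binomialWeight n p m =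
      n.descFactorial k * p ^ k := by
  simpa [binomialWeight] using sum_descFactorial_mul_choose_mul_pow p (1 - p) n k

theorem sum_quartic_mul_binomialWeight (n : ℕ) (p c₀ c₁ c₂ c₃ c₄ : ℝ) :
    ∑ m ∈ range (n + 1),
        (c₀ + c₁ * m + c₂ * m ^ 2 + c₃ * m ^ 3 + c₄ * m ^ 4) * binomialWeight n p m =
      c₀ + c₁ * (n * p) + c₂ * (n * (n - 1) * p ^ 2 + n * p)
        + c₃ * (n * (n - 1) * (n - 2) * p ^ 3 + 3 * n * (n - 1) * p ^ 2 + n * p)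
        + c₄ * (n * (n - 1) * (n - 2) * (n - 3) * p ^ 4 + 6 * n * (n - 1) * (n - 2) * p ^ 3
          + 7 * n * (n - 1) * p ^ 2 + n * p) := by
  -- Stirling numbers of the second kind convert powers into falling factorials.
  have hfalling : ∀ m : ℕ,
      (c₀ + c₁ * m + c₂ * m ^ 2 + c₃ * m ^ 3 + c₄ * m ^ 4) * binomialWeight n p m =
      c₀ * (m.descFactorial 0 * binomialWeight n p m)
        + (c₁ + c₂ + c₃ + c₄) * (m.descFactorial 1 * binomialWeight n p m)
        + (c₂ + 3 * c₃ + 7 * c₄) * (m.descFactorial 2 * binomialWeight n p m)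
        + (c₃ + 6 * c₄) * (m.descFactorial 3 * binomialWeight n p m)
        + c₄ * (m.descFactorial 4 * binomialWeight n p m) := by
    intro m
    simp only [Nat.cast_descFactorial_succ, Nat.descFactorial_zero, Nat.cast_one]
    ring
  simp only [hfalling, sum_add_distrib, ← mul_sum, sum_descFactorial_mul_binomialWeight]
  simp only [Nat.cast_descFactorial_succ, Nat.descFactorial_zero, Nat.cast_one]
  ring

theorem sum_centered_quartic_mul_binomialWeight {n : ℕ} (hn : n ≠ 0) (p c₀ c₁ c₂ c₃ c₄ : ℝ) :
    ∑ m ∈ range (n + 1), (c₀ + c₁ * (m / n - p) + c₂ * (m / n - p) ^ 2 + c₃ * (m / n - p) ^ 3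
        + c₄ * (m / n - p) ^ 4) * binomialWeight n p m =
      c₀ + c₂ * (p * (1 - p) / n) + c₃ * ((1 - 2 * p) * (p * (1 - p)) / n ^ 2)
        + c₄ * (p * (1 - p) * (1 + 3 * (n - 2) * (p * (1 - p))) / n ^ 3) := by
  have hn' : (n : ℝ) ≠ 0 := Nat.cast_ne_zero.2 hn
  have hexpand : ∀ m : ℕ, c₀ + c₁ * (m / n - p) + c₂ * (m / n - p) ^ 2 + c₃ * (m / n - p) ^ 3
        + c₄ * (m / n - p) ^ 4 =
      (c₀ - c₁ * p + c₂ * p ^ 2 - c₃ * p ^ 3 + c₄ * p ^ 4)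
        + (c₁ - 2 * c₂ * p + 3 * c₃ * p ^ 2 - 4 * c₄ * p ^ 3) / n * m
        + (c₂ - 3 * c₃ * p + 6 * c₄ * p ^ 2) / n ^ 2 * m ^ 2
        + (c₃ - 4 * c₄ * p) / n ^ 3 * m ^ 3 + c₄ / n ^ 4 * m ^ 4 := by
    intro m
    field_simp
    ring
  simp_rw [hexpand, sum_quartic_mul_binomialWeight]
  field_simp
  ring

section

variable {Ω : Type*} [MeasurableSpace Ω] {μ : Measure Ω} [IsFiniteMeasure μ] {X : Ω → ℕ} {n : ℕ}
  {p : ℝ}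

theorem IsBinomial.ae_le_s13 (h : IsBinomial μ X n p) : ∀ᵐ ω ∂μ, X ω ≤ n := by
  have hnull : ∀ m, n < m → μ {ω | X ω = m} = 0 := fun m hm => by
    have hμ := h m
    rwa [Nat.choose_eq_zero_of_lt hm, Nat.cast_zero, zero_mul, zero_mul, ← measureReal_def,
      measureReal_eq_zero_iff] at hμ
  refine ae_iff.2 (measure_mono_null (fun ω hω => Set.mem_iUnion.2 ⟨X ω - (n + 1), ?_⟩)
    (measure_iUnion_null fun m => hnull (n + 1 + m) (by omega)))
  simp only [Set.mem_ofPred_eq, not_le] at hω ⊢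
  omega

theorem IsBinomial.integral_eq_sum (h : IsBinomial μ X n p) (hX : Measurable X) (f : ℕ → ℝ) :
    ∫ ω, f (X ω) ∂μ = ∑ m ∈ range (n + 1), f m * binomialWeight n p m := by
  have hXm : ∀ m, MeasurableSet {ω | X ω = m} := fun m => hX (measurableSet_singleton m)
  calc ∫ ω, f (X ω) ∂μ
      = ∫ ω, ∑ m ∈ range (n + 1), {ω | X ω = m}.indicator (fun _ => f m) ω ∂μ := by
        refine integral_congr_ae (h.ae_le_s13.mono fun ω hω => ?_)
        simp [Set.indicator_apply, Nat.lt_succ_iff.2 hω]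
    _ = ∑ m ∈ range (n + 1), f m * binomialWeight n p m := by
        rw [integral_finsetSum _ fun m _ => (integrable_const (f m)).indicator (hXm m)]
        refine sum_congr rfl fun m _ => ?_
        rw [integral_indicator_const _ (hXm m), smul_eq_mul, measureReal_def, h m, mul_comm]
        rfl

theorem IsBinomial.integral_centered_quartic (h : IsBinomial μ X n p) (hX : Measurable X)
    (hn : n ≠ 0) (g : ℝ → ℝ) (c₀ c₁ c₂ c₃ c₄ : ℝ)
    (hg : ∀ x, g x = c₀ + c₁ * (x / n - p) + c₂ * (x / n - p) ^ 2 + c₃ * (x / n - p) ^ 3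
        + c₄ * (x / n - p) ^ 4) :
    ∫ ω, g (X ω) ∂μ =
      c₀ + c₂ * (p * (1 - p) / n) + c₃ * ((1 - 2 * p) * (p * (1 - p)) / n ^ 2)
        + c₄ * (p * (1 - p) * (1 + 3 * (n - 2) * (p * (1 - p))) / n ^ 3) := by
  rw [h.integral_eq_sum hX fun m => g m]
  simp only [hg]
  exact sum_centered_quartic_mul_binomialWeight hn p c₀ c₁ c₂ c₃ c₄

end

theorem stmt_13_general {Ω : Type*} [MeasurableSpace Ω] (μ : Measure Ω) [IsProbabilityMeasure μ]
    (n : ℕ) (hn : 1 ≤ n) (p : ℝ)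
    (X : Ω → ℕ) (hmeas : Measurable X) (hbin : IsBinomial μ X n p) :
    (∫ ω, (((X ω : ℝ) / n - p) ^ 2) * (((X ω : ℝ) / n) * (1 - (X ω : ℝ) / n)) ∂μ)
        - (∫ ω, ((X ω : ℝ) / n - p) ^ 2 ∂μ)
            * (∫ ω, ((X ω : ℝ) / n) * (1 - (X ω : ℝ) / n) ∂μ)
      = (((n : ℝ) - 1) / (n : ℝ) ^ 3) * (p * (1 - p)) * (1 - 6 * (p * (1 - p))) ∧
    (∫ ω, ((X ω : ℝ) / n - p) * (((X ω : ℝ) / n) * (1 - (X ω : ℝ) / n)) ∂μ)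
        - (∫ ω, ((X ω : ℝ) / n - p) ∂μ)
            * (∫ ω, ((X ω : ℝ) / n) * (1 - (X ω : ℝ) / n) ∂μ)
      = ((1 - 2 * p) * (p * (1 - p)) / (n : ℝ)) * (1 - 1 / (n : ℝ)) := by
  have hn₀ : n ≠ 0 := Nat.one_le_iff_ne_zero.1 hn
  have E := hbin.integral_centered_quartic hmeas hn₀
  rw [E (fun x => (x / n - p) ^ 2 * (x / n * (1 - x / n))) 0 0 (p * (1 - p)) (1 - 2 * p) (-1)
      fun x => by ring,
    E (fun x => (x / n - p) ^ 2) 0 0 1 0 0 fun x => by ring,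
    E (fun x => x / n * (1 - x / n)) (p * (1 - p)) (1 - 2 * p) (-1) 0 0 fun x => by ring,
    E (fun x => (x / n - p) * (x / n * (1 - x / n))) 0 (p * (1 - p)) (1 - 2 * p) (-1) 0
      fun x => by ring,
    E (fun x => x / n - p) 0 1 0 0 0 fun x => by ring]
  have hn' : (n : ℝ) ≠ 0 := Nat.cast_ne_zero.2 hn₀
  constructor <;> field_simp <;> ring

/-- `Cov[(π̂−π)², π̂(1−π̂)] = ((n−1)/n³)θ(1−6θ)` and
`Cov[π̂−π, π̂(1−π̂)] = ((1−2π)θ/n)(1 − 1/n)`, where `Cov(Y,Z) = E[YZ] − E[Y]E[Z]`. -/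
theorem stmt_13 {Ω : Type*} [MeasurableSpace Ω] (μ : Measure Ω) [IsProbabilityMeasure μ]
    (n : ℕ) (hn : 1 ≤ n) (p : ℝ) (hp : p ∈ Set.Ioo (0 : ℝ) 1)
    (X : Ω → ℕ) (hmeas : Measurable X) (hbin : IsBinomial μ X n p) :
    (∫ ω, (((X ω : ℝ) / n - p) ^ 2) * (((X ω : ℝ) / n) * (1 - (X ω : ℝ) / n)) ∂μ)
        - (∫ ω, ((X ω : ℝ) / n - p) ^ 2 ∂μ)
            * (∫ ω, ((X ω : ℝ) / n) * (1 - (X ω : ℝ) / n) ∂μ)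
      = (((n : ℝ) - 1) / (n : ℝ) ^ 3) * (p * (1 - p)) * (1 - 6 * (p * (1 - p))) ∧
    (∫ ω, ((X ω : ℝ) / n - p) * (((X ω : ℝ) / n) * (1 - (X ω : ℝ) / n)) ∂μ)
        - (∫ ω, ((X ω : ℝ) / n - p) ∂μ)
            * (∫ ω, ((X ω : ℝ) / n) * (1 - (X ω : ℝ) / n) ∂μ)
      = ((1 - 2 * p) * (p * (1 - p)) / (n : ℝ)) * (1 - 1 / (n : ℝ)) :=
  stmt_13_general μ n hn p X hmeas hbin
end
end

section
/- For an integer n ≥ 2, let f : ℝ → ℝ be given by f(x) = 2x²(1−x)² + x(1−x)/n. Then f''(x) > 0 for all x with 0 < x < 1/2 − (1/(2√3))·√(1 + 1/n), so f is strictly convex on this interval. Consequently, if π₁,…,π_k all lie in (0, 1/2 − (1/(2√3))·√(1 + 1/n)), then (1/k)·Σ_{i=1}^k f(π_i) ≥ f(π̄) where π̄ = (1/k)·Σ_{i=1}^k π_i; that is, in the balanced case n₁ = ⋯ = n_k = n the quantity Σ_{i=1}^k f(π_i) (of the form of 𝒱₁) is at least k·f(π̄) (of the form of 𝒱_{1*}).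 -/
/-! The second derivative is `f'' x = 24 (x - 1/2)² - 2 (1 + 1/n)`, whose smaller root is
`1/2 - √((1 + 1/n) / 12)`; to the left of it `f'' > 0`, so `f` is strictly convex there, and the
averaged inequality is Jensen's inequality with equal weights. -/

open Finset

theorem ConvexOn.map_mean_le {ι : Type*} {s : Set ℝ} {f : ℝ → ℝ} (hf : ConvexOn ℝ s f)
    {t : Finset ι} (ht : t.Nonempty) {p : ι → ℝ} (hp : ∀ i ∈ t, p i ∈ s) :
    f (1 / #t * ∑ i ∈ t, p i) ≤ 1 / #t * ∑ i ∈ t, f (p i) := by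
  have hcard : (#t : ℝ) ≠ 0 := by exact_mod_cast ht.card_pos.ne'
  simpa only [smul_eq_mul, ← mul_sum] using
    hf.map_sum_le (w := fun _ => (1 : ℝ) / #t) (fun _ _ => by positivity) (by simp [hcard]) hp

theorem hasDerivAt_quartic (c x : ℝ) :
    HasDerivAt (fun x => 2 * x ^ 2 * (1 - x) ^ 2 + x * (1 - x) / c)
      (4 * x - 12 * x ^ 2 + 8 * x ^ 3 + (1 - 2 * x) / c) x := by
  have h : HasDerivAt (fun x : ℝ => 2 * x ^ 2 * (1 - x) ^ 2 + x * (1 - x) / c) _ x :=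
    (((hasDerivAt_pow 2 x).const_mul 2).mul (((hasDerivAt_id' x).const_sub 1).fun_pow 2)).add
      (((hasDerivAt_id' x).mul ((hasDerivAt_id' x).const_sub 1)).div_const c)
  exact h.congr_deriv (by push_cast; ring)

theorem hasDerivAt_cubic (c x : ℝ) :
    HasDerivAt (fun x => 4 * x - 12 * x ^ 2 + 8 * x ^ 3 + (1 - 2 * x) / c)
      (24 * (x - 1 / 2) ^ 2 - 2 * (1 + 1 / c)) x := by
  have h : HasDerivAt (fun x : ℝ => 4 * x - 12 * x ^ 2 + 8 * x ^ 3 + (1 - 2 * x) / c) _ x :=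
    ((((hasDerivAt_id' x).const_mul 4).sub ((hasDerivAt_pow 2 x).const_mul 12)).add
      ((hasDerivAt_pow 3 x).const_mul 8)).add
      ((((hasDerivAt_id' x).const_mul 2).const_sub 1).div_const c)
  exact h.congr_deriv (by push_cast; ring)

theorem deriv_deriv_quartic (c x : ℝ) :
    deriv (deriv fun x => 2 * x ^ 2 * (1 - x) ^ 2 + x * (1 - x) / c) x =
      24 * (x - 1 / 2) ^ 2 - 2 * (1 + 1 / c) := by
  rw [funext fun y => (hasDerivAt_quartic c y).deriv]
  exact (hasDerivAt_cubic c x).deriv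

theorem two_mul_lt_of_lt_half_sub {a x : ℝ} (ha : 0 ≤ a)
    (hx : x < 1 / 2 - 1 / (2 * Real.sqrt 3) * Real.sqrt a) : 2 * a < 24 * (x - 1 / 2) ^ 2 := by
  have ht : 0 ≤ 1 / (2 * Real.sqrt 3) * Real.sqrt a := by positivity
  have ht2 : (1 / (2 * Real.sqrt 3) * Real.sqrt a) ^ 2 = a / 12 := by
    rw [mul_pow, div_pow, mul_pow, Real.sq_sqrt zero_le_three, Real.sq_sqrt ha]
    ring
  nlinarith [pow_lt_pow_left₀ (by linarith : 1 / (2 * Real.sqrt 3) * Real.sqrt a < 1 / 2 - x) ht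
    two_ne_zero]

theorem stmt_19_general (n : ℕ) (f : ℝ → ℝ)
    (hf : f = fun x => 2 * x ^ 2 * (1 - x) ^ 2 + x * (1 - x) / (n : ℝ)) :
    (∀ x : ℝ, 0 < x →
      x < 1 / 2 - (1 / (2 * Real.sqrt 3)) * Real.sqrt (1 + 1 / (n : ℝ)) →
      0 < deriv (deriv f) x) ∧
    StrictConvexOn ℝ
      (Set.Ioo 0 (1 / 2 - (1 / (2 * Real.sqrt 3)) * Real.sqrt (1 + 1 / (n : ℝ)))) f ∧
    (∀ (k : ℕ) (π : ℕ → ℝ), 1 ≤ k →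
      (∀ i ∈ Finset.range k,
        π i ∈ Set.Ioo (0 : ℝ) (1 / 2 - (1 / (2 * Real.sqrt 3)) * Real.sqrt (1 + 1 / (n : ℝ)))) →
      f ((1 / (k : ℝ)) * ∑ i ∈ Finset.range k, π i)
        ≤ (1 / (k : ℝ)) * ∑ i ∈ Finset.range k, f (π i) ∧
      (k : ℝ) * f ((1 / (k : ℝ)) * ∑ i ∈ Finset.range k, π i)
        ≤ ∑ i ∈ Finset.range k, f (π i)) := by
  set b := 1 / 2 - (1 / (2 * Real.sqrt 3)) * Real.sqrt (1 + 1 / (n : ℝ))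
  have hf'' (x : ℝ) (hx : x < b) : 0 < deriv (deriv f) x := by
    rw [hf, deriv_deriv_quartic]
    linarith [two_mul_lt_of_lt_half_sub (by positivity) hx]
  have hconv : StrictConvexOn ℝ (Set.Ioo 0 b) f :=
    strictConvexOn_of_deriv2_pos (convex_Ioo _ _) (by rw [hf]; fun_prop) fun x hx =>
      hf'' x (interior_subset hx).2
  refine ⟨fun x _ hx => hf'' x hx, hconv, fun k π hk hπ => ?_⟩
  have hmean := hconv.convexOn.map_mean_le (nonempty_range_iff.2 (by omega)) hπ
  rw [card_range] at hmean
  have hk0 : (0 : ℝ) < k := by exact_mod_cast hk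
  exact ⟨hmean, (mul_le_mul_of_nonneg_left hmean hk0.le).trans_eq (by field_simp)⟩

/-- `f(x) = 2x²(1−x)² + x(1−x)/n` has `f''(x) > 0` on
`(0, 1/2 − (1/(2√3))√(1+1/n))`, is strictly convex there, and consequently by Jensen's
inequality, if all `πᵢ` lie in that interval then `f(π̄) ≤ (1/k)Σ f(πᵢ)`, i.e. in the
balanced case `𝒱_{1*} (= k·f(π̄)) ≤ 𝒱₁ (= Σ f(πᵢ))`. -/
theorem stmt_19 (n : ℕ) (hn : 2 ≤ n) (f : ℝ → ℝ)
    (hf : f = fun x => 2 * x ^ 2 * (1 - x) ^ 2 + x * (1 - x) / (n : ℝ)) :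
    (∀ x : ℝ, 0 < x →
      x < 1 / 2 - (1 / (2 * Real.sqrt 3)) * Real.sqrt (1 + 1 / (n : ℝ)) →
      0 < deriv (deriv f) x) ∧
    StrictConvexOn ℝ
      (Set.Ioo 0 (1 / 2 - (1 / (2 * Real.sqrt 3)) * Real.sqrt (1 + 1 / (n : ℝ)))) f ∧
    (∀ (k : ℕ) (π : ℕ → ℝ), 1 ≤ k →
      (∀ i ∈ Finset.range k,
        π i ∈ Set.Ioo (0 : ℝ) (1 / 2 - (1 / (2 * Real.sqrt 3)) * Real.sqrt (1 + 1 / (n : ℝ)))) →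
      f ((1 / (k : ℝ)) * ∑ i ∈ Finset.range k, π i)
        ≤ (1 / (k : ℝ)) * ∑ i ∈ Finset.range k, f (π i) ∧
      (k : ℝ) * f ((1 / (k : ℝ)) * ∑ i ∈ Finset.range k, π i)
        ≤ ∑ i ∈ Finset.range k, f (π i)) :=
  stmt_19_general n f hf
end
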